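/- Let n ≥ 1 and let J be an index set. In the free group G_n^{*J} with basis {x_{i,j}(α) : 1 ≤ i < j ≤ n+1, α ∈ J}, with face homomorphisms d_t (0 ≤ t ≤ n) defined by the stated formulas, the Moore cycle subgroup ⋂_{k=0}^{n} ker(d_k : G_n^{*J} → G_{n-1}^{*J}) equals R[{1, 2, …, n+1}], i.e., the symmetric commutator subgroup [R_{i,j} | 1 ≤ i < j ≤ n+1]_S. -/

import Mathlib

/-!
Let `ρ_t` be the retraction of `G_n^{*J}` killing the generators `x_{i,j}(α)` with `t ∈ {i, j}`.
Then `ρ_{k+1}` is `d_k` followed by a reindexing, so `ker d_k ⊆ ker ρ_{k+1}`, and `ker ρ_t` is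
the join of the `R_{i,j}` with `t ∈ {i, j}`. Since `R[∅]` is the whole group, the cycles lie in
`R[{1, …, n+1}]` once `R[T] ∩ ker ρ_t ⊆ R[T ∪ {t}]`. For this, `ρ_t` is shown to act trivially
modulo `R[T ∪ {t}]` on every left-normed commutator `[[R_{p_1}, …], R_{p_m}]` indexed by `T`, by
induction on `m`; the inductive step uses `R_p ∩ ker ρ_t ⊆ [R_p, ker ρ_t]` for `t ∉ p` and the
three subgroups lemma. Conversely `d_k` kills `R_{i,j}` when `k + 1 ∈ {i, j}`.
-/

/-- The index set of pairs `(i, j)` with `1 ≤ i < j ≤ m`. -/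
abbrev PairIdx (m : ℕ) : Type :=
  {p : ℕ × ℕ // 1 ≤ p.1 ∧ p.1 < p.2 ∧ p.2 ≤ m}

/-- The free group `G_n^{*J}` on the generators `x_{i,j}(α)`, `1 ≤ i < j ≤ n+1`, `α ∈ J`. -/
abbrev FreeGp (n : ℕ) (J : Type) : Type :=
  FreeGroup (PairIdx (n + 1) × J)

/-- The face homomorphism `d_t : G_n^{*J} → G_{n-1}^{*J}` (for `0 ≤ t ≤ n`), defined on the
generators by the formulas: `d_t x_{i,j}(α) = x_{i-1,j-1}(α)` if `t+1 < i`; ` = 1` if `t+1 = i`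
or `t+1 = j`; `= x_{i,j-1}(α)` if `i < t+1 < j`; `= x_{i,j}(α)` if `t+1 > j`. -/
def faceMap (n : ℕ) (J : Type) (t : Fin (n + 1)) :
    FreeGroup (PairIdx (n + 1) × J) →* FreeGroup (PairIdx n × J) :=
  FreeGroup.lift fun q =>
    if h1 : (t : ℕ) + 1 < q.1.1.1 then
      FreeGroup.of (⟨(q.1.1.1 - 1, q.1.1.2 - 1), by
        have hp := q.1.2; have ht := t.isLt; omega⟩, q.2)
    else if h2 : (t : ℕ) + 1 = q.1.1.1 then 1
    else if h3 : (t : ℕ) + 1 < q.1.1.2 then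
      FreeGroup.of (⟨(q.1.1.1, q.1.1.2 - 1), by
        have hp := q.1.2; have ht := t.isLt; omega⟩, q.2)
    else if h4 : (t : ℕ) + 1 = q.1.1.2 then 1
    else FreeGroup.of (⟨(q.1.1.1, q.1.1.2), by
        have hp := q.1.2; have ht := t.isLt; omega⟩, q.2)

/-- The normal closure `R_{i,j}` in `G_n^{*J}` of the set `{x_{i,j}(α) : α ∈ J}`,
for a pair `p = (i, j)` with `1 ≤ i < j ≤ n+1`. -/
def Rpair (n : ℕ) (J : Type) (p : PairIdx (n + 1)) : Subgroup (FreeGp n J) :=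
  Subgroup.normalClosure (Set.range fun α : J => FreeGroup.of (p, α))

/-- The left-normed iterated commutator subgroup `[[…[[H₁, H₂], H₃], …], H_m]` of a list
of subgroups; a singleton list gives the subgroup itself. -/
def iteratedCommutator {G : Type*} [Group G] : List (Subgroup G) → Subgroup G
  | [] => ⊥
  | H :: L => L.foldl (fun A B => ⁅A, B⁆) H

/-- The set of indices occurring among the entries of a list of pairs. -/
def pairsUnion {m : ℕ} (L : List (PairIdx m)) : Set ℕ :=
  {k | ∃ p ∈ L, k = p.1.1 ∨ k = p.1.2}

/-- `R[T]`: the join of all left-normed iterated commutator subgroups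
`[[…[[R_{i₁,j₁}, R_{i₂,j₂}], …], R_{i_t,j_t}]` over nonempty finite sequences of pairs such that
every element of `T` occurs among the indices `i₁, j₁, …, i_t, j_t`. -/
def RT (n : ℕ) (J : Type) (T : Set ℕ) : Subgroup (FreeGp n J) :=
  ⨆ (L : List (PairIdx (n + 1))) (_ : L ≠ []) (_ : T ⊆ pairsUnion L),
    iteratedCommutator (L.map (Rpair n J))

open scoped commutatorElement

section Commutators

variable {G : Type*} [Group G]

theorem le_iff_map_mk'_eq_bot {H N : Subgroup G} [N.Normal] :
    H ≤ N ↔ H.map (QuotientGroup.mk' N) = ⊥ := by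
  rw [Subgroup.map_eq_bot_iff, QuotientGroup.ker_mk']

theorem commutator_iSup_left_le {ι : Sort*} {S : ι → Subgroup G} {B N : Subgroup G}
    [N.Normal] (h : ∀ i, ⁅S i, B⁆ ≤ N) : ⁅⨆ i, S i, B⁆ ≤ N := by
  simp only [le_iff_map_mk'_eq_bot, Subgroup.map_commutator, Subgroup.map_iSup,
    Subgroup.commutator_eq_bot_iff_le_centralizer, iSup_le_iff] at h ⊢
  exact h

theorem commutator_iSup_right_le {ι : Sort*} {A N : Subgroup G} {S : ι → Subgroup G}
    [N.Normal] (h : ∀ i, ⁅A, S i⁆ ≤ N) : ⁅A, ⨆ i, S i⁆ ≤ N := by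
  rw [Subgroup.commutator_comm]
  exact commutator_iSup_left_le fun i => (Subgroup.commutator_comm _ _).le.trans (h i)

theorem commutator_commutator_le_of_rotate {X Y Z N : Subgroup G} [N.Normal]
    (h1 : ⁅⁅Y, Z⁆, X⁆ ≤ N) (h2 : ⁅⁅Z, X⁆, Y⁆ ≤ N) : ⁅⁅X, Y⁆, Z⁆ ≤ N := by
  simp only [le_iff_map_mk'_eq_bot, Subgroup.map_commutator] at h1 h2 ⊢
  exact Subgroup.commutator_commutator_eq_bot_of_rotate h1 h2

theorem commutatorElement_mul_mul_eq {a b m d : G} (hmb : Commute m b) (hmd : Commute m d)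
    (had : Commute a d) : ⁅a * m, b * d⁆ = ⁅a, b⁆ := by
  have h1 : m * (b * d) * m⁻¹ = b * d := (hmb.mul_right hmd).mul_inv_cancel
  have h2 : d * a⁻¹ * d⁻¹ = a⁻¹ := had.symm.inv_right.mul_inv_cancel
  calc ⁅a * m, b * d⁆ = a * (m * (b * d) * m⁻¹) * a⁻¹ * d⁻¹ * b⁻¹ := by group
    _ = a * b * (d * a⁻¹ * d⁻¹) * b⁻¹ := by rw [h1]; group
    _ = ⁅a, b⁆ := by rw [h2, commutatorElement_def]

end Commutators

section Retraction

variable {G : Type*} [Group G] (ρ : G →* G)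

def fixedModulo (M : Subgroup G) [M.Normal] : Subgroup G :=
  MonoidHom.eqLocus ((QuotientGroup.mk' M).comp ρ) (QuotientGroup.mk' M)

variable {ρ}

theorem mem_fixedModulo {M : Subgroup G} [M.Normal] {x : G} :
    x ∈ fixedModulo ρ M ↔ (ρ x)⁻¹ * x ∈ M :=
  QuotientGroup.eq

theorem fixedModulo_mono {M M' : Subgroup G} [M.Normal] [M'.Normal] (h : M ≤ M') :
    fixedModulo ρ M ≤ fixedModulo ρ M' :=
  fun _ hx => mem_fixedModulo.2 (h (mem_fixedModulo.1 hx))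

theorem mem_of_mem_fixedModulo_of_mem_ker {M : Subgroup G} [M.Normal] {x : G}
    (hx : x ∈ fixedModulo ρ M) (hker : x ∈ ρ.ker) : x ∈ M := by
  rwa [mem_fixedModulo, MonoidHom.mem_ker.1 hker, inv_one, one_mul] at hx

theorem inv_apply_mul_mem_ker (hρ : ∀ x, ρ (ρ x) = ρ x) (x : G) : (ρ x)⁻¹ * x ∈ ρ.ker := by
  simp [hρ]

theorem normalClosure_inf_ker_le_commutator (hρ : ∀ x, ρ (ρ x) = ρ x) {S : Set G}
    (hS : ∀ s ∈ S, ρ s = s) :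
    Subgroup.normalClosure S ⊓ ρ.ker ≤ ⁅Subgroup.normalClosure S, ρ.ker⁆ := by
  rintro x ⟨hxS, hxK⟩
  refine mem_of_mem_fixedModulo_of_mem_ker ((Subgroup.closure_le _).2 ?_ hxS) hxK
  intro y hy
  obtain ⟨s, hs, hconj⟩ := Group.mem_conjugatesOfSet_iff.1 hy
  obtain ⟨g, rfl⟩ := isConj_iff.1 hconj
  set r := (ρ g)⁻¹ * g
  have hr : r ∈ ρ.ker := inv_apply_mul_mem_ker hρ g
  have hcomm : ⁅s⁻¹, r⁆ ∈ ⁅Subgroup.normalClosure S, ρ.ker⁆ :=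
    Subgroup.commutator_mem_commutator (inv_mem (Subgroup.subset_normalClosure hs)) hr
  have key : (ρ (g * s * g⁻¹))⁻¹ * (g * s * g⁻¹) = ρ g * ⁅s⁻¹, r⁆ * (ρ g)⁻¹ := by
    simp only [map_mul, map_inv, hS s hs, r, commutatorElement_def]
    group
  rw [SetLike.mem_coe, mem_fixedModulo, key]
  exact Subgroup.Normal.conj_mem inferInstance _ hcomm _

theorem commutator_le_fixedModulo (hρ : ∀ x, ρ (ρ x) = ρ x) {A B M₀ M : Subgroup G}
    [B.Normal] [M₀.Normal] [M.Normal] (hA : A ≤ fixedModulo ρ M₀) (hB : ∀ b ∈ B, ρ b ∈ B)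
    (hM₀ : ⁅M₀, B⁆ ≤ M) (hAB : ⁅A, B ⊓ ρ.ker⁆ ≤ M) : ⁅A, B⁆ ≤ fixedModulo ρ M := by
  rw [Subgroup.commutator_le]
  intro a ha b hb
  set q := QuotientGroup.mk' M
  have commute_of {u v : G} (h : ⁅u, v⁆ ∈ M) : Commute (q u) (q v) := by
    rw [← commutatorElement_eq_one_iff_commute, ← map_commutatorElement]
    exact (QuotientGroup.eq_one_iff _).2 h
  set m := (ρ a)⁻¹ * a
  set d := b⁻¹ * ρ b
  have hm : m ∈ M₀ := mem_fixedModulo.1 (hA ha)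
  have hd : d ∈ B ⊓ ρ.ker :=
    Subgroup.mem_inf.2 ⟨mul_mem (inv_mem hb) (hB b hb), by simp [d, hρ]⟩
  have hmb := commute_of (hM₀ (Subgroup.commutator_mem_commutator hm hb))
  have hmd := commute_of (hM₀ (Subgroup.commutator_mem_commutator hm hd.1))
  have had := commute_of (hAB (Subgroup.commutator_mem_commutator ha hd))
  have hρa : ρ a = a * m⁻¹ := by simp [m]
  have hρb : ρ b = b * d := by simp [d]
  change q (ρ ⁅a, b⁆) = q ⁅a, b⁆
  rw [map_commutatorElement, map_commutatorElement, hρa, hρb, map_mul, map_mul, map_inv,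
    commutatorElement_mul_mul_eq hmb.inv_left hmd.inv_left had, map_commutatorElement]

end Retraction

section IteratedCommutator

variable {G : Type*} [Group G]

theorem iteratedCommutator_cons_cons (H K : Subgroup G) (L : List (Subgroup G)) :
    iteratedCommutator (H :: K :: L) = iteratedCommutator (⁅H, K⁆ :: L) :=
  rfl

theorem iteratedCommutator_normal :
    ∀ {L : List (Subgroup G)}, (∀ K ∈ L, K.Normal) → (iteratedCommutator L).Normal
  | [], _ => Subgroup.normal_bot
  | [H], h => h H (by simp)
  | H :: K :: L, h => by
    have := h H (by simp)
    have := h K (by simp)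
    rw [iteratedCommutator_cons_cons]
    refine iteratedCommutator_normal fun K' hK' => ?_
    rcases List.mem_cons.1 hK' with rfl | hK'
    · infer_instance
    · exact h K' (by simp [hK'])
termination_by L => L.length

theorem iteratedCommutator_le_of_mem {N : Subgroup G} [N.Normal] :
    ∀ {L : List (Subgroup G)} {K : Subgroup G}, K ∈ L → K ≤ N → iteratedCommutator L ≤ N
  | [H], K, hK, hKN => by rwa [List.mem_singleton.1 hK] at hKN
  | H :: K' :: L, K, hK, hKN => by
    rw [iteratedCommutator_cons_cons]
    rcases List.mem_cons.1 hK with rfl | hK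
    · exact iteratedCommutator_le_of_mem List.mem_cons_self
        ((Subgroup.commutator_mono hKN le_rfl).trans (Subgroup.commutator_le_left _ _))
    rcases List.mem_cons.1 hK with rfl | hK
    · exact iteratedCommutator_le_of_mem List.mem_cons_self
        ((Subgroup.commutator_mono le_rfl hKN).trans (Subgroup.commutator_le_right _ _))
    · exact iteratedCommutator_le_of_mem (List.mem_cons_of_mem _ hK) hKN
termination_by L => L.length

theorem iteratedCommutator_append_singleton {L : List (Subgroup G)} (hL : L ≠ [])
    (H : Subgroup G) : iteratedCommutator (L ++ [H]) = ⁅iteratedCommutator L, H⁆ := by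
  obtain ⟨K, L, rfl⟩ := List.exists_cons_of_ne_nil hL
  exact List.foldl_append ..

end IteratedCommutator

abbrev IncidentPairs (m t : ℕ) : Type :=
  {q : PairIdx m // t = q.1.1 ∨ t = q.1.2}

theorem mem_pairsUnion {m k : ℕ} {L : List (PairIdx m)} :
    k ∈ pairsUnion L ↔ ∃ p ∈ L, k = p.1.1 ∨ k = p.1.2 :=
  Iff.rfl

theorem pairsUnion_append {m : ℕ} (L L' : List (PairIdx m)) :
    pairsUnion (L ++ L') = pairsUnion L ∪ pairsUnion L' := by
  ext k
  simp only [Set.mem_union, mem_pairsUnion, List.mem_append, or_and_right, exists_or]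

theorem pairsUnion_mono {m : ℕ} {L L' : List (PairIdx m)} (h : L ⊆ L') :
    pairsUnion L ⊆ pairsUnion L' :=
  fun _ ⟨p, hp, hk⟩ => ⟨p, h hp, hk⟩

section RT

variable {n : ℕ} {J : Type}

instance Rpair_normal (p : PairIdx (n + 1)) : (Rpair n J p).Normal :=
  Subgroup.normalClosure_normal

instance iteratedCommutator_map_Rpair_normal (L : List (PairIdx (n + 1))) :
    (iteratedCommutator (L.map (Rpair n J))).Normal :=
  iteratedCommutator_normal (by simp only [List.mem_map]; rintro _ ⟨p, -, rfl⟩; infer_instance)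

instance RT_normal (T : Set ℕ) : (RT n J T).Normal := by
  unfold RT; infer_instance

theorem of_mem_Rpair (p : PairIdx (n + 1)) (α : J) : FreeGroup.of (p, α) ∈ Rpair n J p :=
  Subgroup.subset_normalClosure ⟨α, rfl⟩

theorem le_RT {T : Set ℕ} {L : List (PairIdx (n + 1))} (hL : L ≠ []) (hT : T ⊆ pairsUnion L) :
    iteratedCommutator (L.map (Rpair n J)) ≤ RT n J T :=
  le_iSup_of_le L (le_iSup_of_le hL (le_iSup_of_le hT le_rfl))

theorem RT_le {T : Set ℕ} {K : Subgroup (FreeGp n J)}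
    (h : ∀ L, L ≠ [] → T ⊆ pairsUnion L → iteratedCommutator (L.map (Rpair n J)) ≤ K) :
    RT n J T ≤ K :=
  iSup_le fun L => iSup_le fun hL => iSup_le (h L hL)

theorem RT_anti {T T' : Set ℕ} (h : T ⊆ T') : RT n J T' ≤ RT n J T :=
  RT_le fun _ hL hT' => le_RT hL (h.trans hT')

theorem Rpair_le_RT {T : Set ℕ} {p : PairIdx (n + 1)} (hT : T ⊆ pairsUnion [p]) :
    Rpair n J p ≤ RT n J T :=
  le_RT (L := [p]) (List.cons_ne_nil _ _) hT

theorem commutator_Rpair_le_RT {T : Set ℕ} {p q : PairIdx (n + 1)}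
    (hT : T ⊆ pairsUnion [p, q]) : ⁅Rpair n J p, Rpair n J q⁆ ≤ RT n J T :=
  le_RT (L := [p, q]) (List.cons_ne_nil _ _) hT

theorem RT_empty : RT n J ∅ = ⊤ := by
  refine (Subgroup.eq_top_iff' _).2 fun w => ?_
  induction w using FreeGroup.induction_on with
  | C1 => exact one_mem _
  | of x => exact Rpair_le_RT (Set.empty_subset _) (of_mem_Rpair x.1 x.2)
  | inv_of x ih => exact inv_mem ih
  | mul x y ihx ihy => exact mul_mem ihx ihy

theorem iteratedCommutator_map_Rpair_concat {L : List (PairIdx (n + 1))} (hL : L ≠ [])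
    (p : PairIdx (n + 1)) :
    iteratedCommutator ((L ++ [p]).map (Rpair n J)) =
      ⁅iteratedCommutator (L.map (Rpair n J)), Rpair n J p⁆ := by
  rw [List.map_append, List.map_singleton,
    iteratedCommutator_append_singleton (by simpa using hL)]

theorem commutator_RT_Rpair_le (T : Set ℕ) (p : PairIdx (n + 1)) :
    ⁅RT n J T, Rpair n J p⁆ ≤ RT n J (T ∪ pairsUnion [p]) := by
  refine commutator_iSup_left_le fun L => commutator_iSup_left_le fun hL =>
    commutator_iSup_left_le fun hT => ?_
  rw [← iteratedCommutator_map_Rpair_concat hL]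
  exact le_RT (by simp) (pairsUnion_append L [p] ▸ Set.union_subset_union_left _ hT)

end RT

section KillIndex

variable (n : ℕ) (J : Type)

def killIndex (t : ℕ) : FreeGp n J →* FreeGp n J :=
  FreeGroup.lift fun x => if t = x.1.1.1 ∨ t = x.1.1.2 then 1 else FreeGroup.of x

variable {n J}

theorem killIndex_of (t : ℕ) (x : PairIdx (n + 1) × J) :
    killIndex n J t (FreeGroup.of x) =
      if t = x.1.1.1 ∨ t = x.1.1.2 then 1 else FreeGroup.of x :=
  FreeGroup.lift_apply_of

theorem killIndex_killIndex (t : ℕ) (w : FreeGp n J) :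
    killIndex n J t (killIndex n J t w) = killIndex n J t w := by
  suffices (killIndex n J t).comp (killIndex n J t) = killIndex n J t from
    DFunLike.congr_fun this w
  refine FreeGroup.ext_hom _ _ fun x => ?_
  by_cases hx : t = x.1.1.1 ∨ t = x.1.1.2 <;> simp [killIndex_of, hx]

theorem killIndex_mem_Rpair (t : ℕ) {p : PairIdx (n + 1)} {x : FreeGp n J}
    (hx : x ∈ Rpair n J p) : killIndex n J t x ∈ Rpair n J p := by
  refine Subgroup.normalClosure_le_normal (N := (Rpair n J p).comap (killIndex n J t)) ?_ hx
  rintro _ ⟨α, rfl⟩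
  by_cases hp : t = p.1.1 ∨ t = p.1.2
  · simp [killIndex_of, hp]
  · simpa [killIndex_of, hp] using of_mem_Rpair p α

theorem ker_killIndex (t : ℕ) :
    (killIndex n J t).ker = ⨆ q : IncidentPairs (n + 1) t, Rpair n J q.1 := by
  set M := ⨆ q : IncidentPairs (n + 1) t, Rpair n J q.1
  refine le_antisymm (fun x hx => mem_of_mem_fixedModulo_of_mem_ker ?_ hx) ?_
  · suffices (QuotientGroup.mk' M).comp (killIndex n J t) = QuotientGroup.mk' M from
      DFunLike.congr_fun this x
    refine FreeGroup.ext_hom _ _ fun x => ?_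
    by_cases hx : t = x.1.1.1 ∨ t = x.1.1.2
    · simp only [MonoidHom.comp_apply, killIndex_of, if_pos hx, map_one]
      exact ((QuotientGroup.eq_one_iff _).2
        (Subgroup.mem_iSup_of_mem ⟨x.1, hx⟩ (of_mem_Rpair x.1 x.2))).symm
    · simp only [MonoidHom.comp_apply, killIndex_of, if_neg hx]
  · refine iSup_le fun q => Subgroup.normalClosure_le_normal ?_
    rintro _ ⟨α, rfl⟩
    simp [killIndex_of, q.2]

theorem Rpair_inf_ker_killIndex_le {t : ℕ} {p : PairIdx (n + 1)}
    (hp : ¬(t = p.1.1 ∨ t = p.1.2)) :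
    Rpair n J p ⊓ (killIndex n J t).ker ≤
      ⨆ q : IncidentPairs (n + 1) t, ⁅Rpair n J p, Rpair n J q.1⁆ := by
  refine (normalClosure_inf_ker_le_commutator (killIndex_killIndex t)
    (S := Set.range fun α : J => FreeGroup.of (p, α)) ?_).trans ?_
  · rintro _ ⟨α, rfl⟩
    simp [killIndex_of, hp]
  · rw [ker_killIndex]
    exact commutator_iSup_right_le fun q =>
      le_iSup (fun q : IncidentPairs (n + 1) t =>
        ⁅Rpair n J p, Rpair n J q.1⁆) q

theorem Rpair_inf_ker_killIndex_le_RT (t : ℕ) (p : PairIdx (n + 1)) :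
    Rpair n J p ⊓ (killIndex n J t).ker ≤ RT n J (insert t (pairsUnion [p])) := by
  by_cases hp : t = p.1.1 ∨ t = p.1.2
  · exact inf_le_left.trans (Rpair_le_RT (Set.insert_subset ⟨p, by simp, hp⟩ subset_rfl))
  · refine (Rpair_inf_ker_killIndex_le hp).trans (iSup_le fun q => commutator_Rpair_le_RT ?_)
    exact Set.insert_subset ⟨q.1, by simp, q.2⟩ (pairsUnion_mono (by simp))

theorem commutator_commutator_RT_le (T : Set ℕ) (p q : PairIdx (n + 1)) :
    ⁅⁅RT n J T, Rpair n J p⁆, Rpair n J q⁆ ≤ RT n J (T ∪ pairsUnion [p] ∪ pairsUnion [q]) :=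
  (Subgroup.commutator_mono (commutator_RT_Rpair_le T p) le_rfl).trans
    (commutator_RT_Rpair_le _ q)

theorem commutator_RT_inf_ker_killIndex_le (T : Set ℕ) (t : ℕ) (p : PairIdx (n + 1)) :
    ⁅RT n J T, Rpair n J p ⊓ (killIndex n J t).ker⁆ ≤
      RT n J (insert t (T ∪ pairsUnion [p])) := by
  by_cases hp : t = p.1.1 ∨ t = p.1.2
  · refine (Subgroup.commutator_mono le_rfl inf_le_left).trans
      ((commutator_RT_Rpair_le T p).trans (RT_anti ?_))
    exact Set.insert_subset (Or.inr ⟨p, by simp, hp⟩) subset_rfl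
  · refine (Subgroup.commutator_mono le_rfl (Rpair_inf_ker_killIndex_le hp)).trans
      (commutator_iSup_right_le fun q => ?_)
    have hsub : insert t (T ∪ pairsUnion [p]) ⊆ T ∪ pairsUnion [p] ∪ pairsUnion [q.1] :=
      Set.insert_subset (Or.inr ⟨q.1, by simp, q.2⟩) Set.subset_union_left
    rw [Subgroup.commutator_comm]
    refine commutator_commutator_le_of_rotate ?_ ?_
    · rw [Subgroup.commutator_comm (Rpair n J q.1)]
      exact (commutator_commutator_RT_le T q.1 p).trans
        (RT_anti (Set.union_right_comm T _ _ ▸ hsub))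
    · exact (commutator_commutator_RT_le T p q.1).trans (RT_anti hsub)

theorem iteratedCommutator_le_fixedModulo_killIndex (t : ℕ) {L : List (PairIdx (n + 1))}
    (hL : L ≠ []) :
    iteratedCommutator (L.map (Rpair n J)) ≤
      fixedModulo (killIndex n J t) (RT n J (insert t (pairsUnion L))) := by
  induction L using List.reverseRecOn with
  | nil => exact absurd rfl hL
  | append_singleton L₀ p ih =>
    rcases eq_or_ne L₀ [] with rfl | hL₀
    · intro x hx
      refine mem_fixedModulo.2
        (Rpair_inf_ker_killIndex_le_RT t p (Subgroup.mem_inf.2 ⟨?_, ?_⟩))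
      · exact mul_mem (inv_mem (killIndex_mem_Rpair t hx)) hx
      · exact inv_apply_mul_mem_ker (killIndex_killIndex t) x
    rw [iteratedCommutator_map_Rpair_concat hL₀, pairsUnion_append]
    refine commutator_le_fixedModulo (killIndex_killIndex t) (ih hL₀)
      (fun _ => killIndex_mem_Rpair t) ?_ ?_
    · rw [← Set.insert_union]
      exact commutator_RT_Rpair_le _ p
    · exact (Subgroup.commutator_mono (le_RT hL₀ subset_rfl) le_rfl).trans
        (commutator_RT_inf_ker_killIndex_le _ t p)

theorem RT_inf_ker_killIndex_le (T : Set ℕ) (t : ℕ) :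
    RT n J T ⊓ (killIndex n J t).ker ≤ RT n J (insert t T) := by
  rintro x ⟨hx, hker⟩
  refine mem_of_mem_fixedModulo_of_mem_ker ?_ hker
  refine RT_le (fun L hL hT => ?_) hx
  exact (iteratedCommutator_le_fixedModulo_killIndex t hL).trans
    (fixedModulo_mono (RT_anti (Set.insert_subset_insert hT)))

theorem iInf_ker_killIndex_le_RT (S : Finset ℕ) :
    ⨅ t ∈ S, (killIndex n J t).ker ≤ RT n J S := by
  induction S using Finset.induction_on with
  | empty => simp [RT_empty]
  | insert a S _ ih =>
    rw [Finset.iInf_insert, Finset.coe_insert, inf_comm]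
    exact (inf_le_inf_right _ ih).trans (RT_inf_ker_killIndex_le _ a)

end KillIndex

section FaceMap

variable {n : ℕ} {J : Type}

variable (n J) in
def skipIndex (k : Fin (n + 1)) : FreeGroup (PairIdx n × J) →* FreeGp n J :=
  FreeGroup.lift fun q =>
    FreeGroup.of (⟨(if (k : ℕ) + 1 ≤ q.1.1.1 then q.1.1.1 + 1 else q.1.1.1,
      if (k : ℕ) + 1 ≤ q.1.1.2 then q.1.1.2 + 1 else q.1.1.2), by
        have hq := q.1.2
        refine ⟨?_, ?_, ?_⟩ <;> split_ifs <;> omega⟩, q.2)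

theorem of_mk_eq_of_mk {a b i j : ℕ} (h : 1 ≤ a ∧ a < b ∧ b ≤ n + 1)
    (h' : 1 ≤ i ∧ i < j ∧ j ≤ n + 1) (α : J) (hai : a = i) (hbj : b = j) :
    (FreeGroup.of ((⟨(a, b), h⟩ : PairIdx (n + 1)), α) : FreeGp n J) =
      FreeGroup.of (⟨(i, j), h'⟩, α) := by
  subst hai hbj
  rfl

theorem skipIndex_comp_faceMap (k : Fin (n + 1)) :
    (skipIndex n J k).comp (faceMap n J k) = killIndex n J (k + 1) := by
  refine FreeGroup.ext_hom _ _ fun ⟨⟨⟨i, j⟩, hij⟩, α⟩ => ?_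
  rw [MonoidHom.comp_apply, killIndex_of, faceMap, FreeGroup.lift_apply_of]
  dsimp only
  split_ifs <;>
    first
      | rfl
      | (exfalso; omega)
      | (rw [skipIndex, FreeGroup.lift_apply_of]
         dsimp only
         refine of_mk_eq_of_mk _ _ _ ?_ ?_ <;> split_ifs <;> omega)

theorem ker_faceMap_le (k : Fin (n + 1)) :
    (faceMap n J k).ker ≤ (killIndex n J (k + 1)).ker := by
  intro x hx
  rw [MonoidHom.mem_ker, ← skipIndex_comp_faceMap, MonoidHom.comp_apply, MonoidHom.mem_ker.1 hx,
    map_one]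

theorem faceMap_of_eq_one {k : Fin (n + 1)} {p : PairIdx (n + 1)}
    (h : (k : ℕ) + 1 = p.1.1 ∨ (k : ℕ) + 1 = p.1.2) (α : J) :
    faceMap n J k (FreeGroup.of (p, α)) = 1 := by
  have hp := p.2
  rw [faceMap, FreeGroup.lift_apply_of]
  dsimp only
  rcases h with h | h
  · rw [dif_neg (by omega), dif_pos h]
  · rw [dif_neg (by omega), dif_neg (by omega), dif_neg (by omega), dif_pos h]

theorem RT_le_ker_faceMap {T : Set ℕ} {k : Fin (n + 1)} (hk : (k : ℕ) + 1 ∈ T) :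
    RT n J T ≤ (faceMap n J k).ker := by
  refine RT_le fun L _ hT => ?_
  obtain ⟨p, hp, hkp⟩ := hT hk
  refine iteratedCommutator_le_of_mem (List.mem_map_of_mem hp)
    (Subgroup.normalClosure_le_normal ?_)
  rintro _ ⟨α, rfl⟩
  exact faceMap_of_eq_one hkp α

end FaceMap

theorem mooreCycles_eq_RT_general (n : ℕ) (J : Type) :
    (⨅ k : Fin (n + 1), MonoidHom.ker (faceMap n J k)) = RT n J (Set.Icc 1 (n + 1)) := by
  refine le_antisymm ?_ (le_iInf fun k => RT_le_ker_faceMap ⟨Nat.le_add_left 1 k, k.isLt⟩)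
  calc ⨅ k : Fin (n + 1), (faceMap n J k).ker
      ≤ ⨅ t ∈ Finset.Icc 1 (n + 1), (killIndex n J t).ker := by
        refine le_iInf₂ fun t ht => ?_
        obtain ⟨ht1, ht2⟩ := Finset.mem_Icc.1 ht
        have hk := ker_faceMap_le (n := n) (J := J) ⟨t - 1, by omega⟩
        rw [Fin.val_mk, Nat.sub_add_cancel ht1] at hk
        exact (iInf_le _ _).trans hk
    _ ≤ RT n J (Set.Icc 1 (n + 1)) :=
        Finset.coe_Icc 1 (n + 1) ▸ iInf_ker_killIndex_le_RT _

/-- The Moore cycle subgroup `⋂_{k=0}^{n} ker(d_k : G_n^{*J} → G_{n-1}^{*J})` equals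
`R[{1, 2, …, n+1}]`, i.e. the symmetric commutator subgroup `[R_{i,j} | 1 ≤ i < j ≤ n+1]_S`. -/
theorem mooreCycles_eq_RT (n : ℕ) (hn : 1 ≤ n) (J : Type) :
    (⨅ k : Fin (n + 1), MonoidHom.ker (faceMap n J k)) = RT n J (Set.Icc 1 (n + 1)) :=
  mooreCycles_eq_RT_general n J
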